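/- arXiv:2007.02479 — 2 statements merged into one kernel-verified Lean document; each statement's English description precedes it below -/
import Mathlib

section
/- The composition μ^q_{k,t} = μ^♯_{k,t} ∘ μ'_{k,t} of the conjugation by the coefficient-quantum-dilogarithm Ψ_{q_k}((t^{[c_k]_+}/t^{[−c_k]_+})X̃_k) with the monomial change-of-basis map satisfies, in cluster coordinates: μ^q_{k,t}(X̃_{i;𝒢'}) = X̃_{k;𝒢}^{−1} if i = k, and X̃_{i;𝒢}·(∏_{ℓ=1}^{|ε_{ik}|}(t^{[sgn(ε_{ik})c_k]_+} + t^{[−sgn(ε_{ik})c_k]_+} q_k^{2ℓ−1} X̃_{k;𝒢}^{−sgn(ε_{ik})}))^{−sgn(ε_{ik})} if i ≠ k. -/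
/-!
The recursion for the coefficients `c n` says exactly that `Ψ(q²x) = (1 + q x) Ψ(x)`, hence
`Ψ(q^{2m} x) = ∏_{ℓ<m} (1 + q^{2ℓ+1} x) Ψ(x)` (`dilogRatio`). The argument of `Ψ` is
`y = (tp/tm) X̃_k`, which commutes with `X̃_k`, while `X̃_i` semiconjugates `y` to `q^{2ε} y`.
So `X̃_k` commutes with `Ψ(y)`, and pushing `X̃_i` through `Ψ(y)` produces the finite product
`dilogRatio q y |ε|`, on the left or on the right according to the sign of `ε`. The prefactor
`tm^{-ε} q^{-ε[ε]_+} X̃_k^{[ε]_+}` of `μ'` is what turns this product into `P^{sgn ε}`.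
-/

open List

namespace List

variable {ι M : Type*} [Monoid M]

theorem prod_map_mul_of_commute (l : List ι) {f g : ι → M} (h : ∀ i j, Commute (g i) (f j)) :
    (l.map fun i => f i * g i).prod = (l.map f).prod * (l.map g).prod := by
  induction l with
  | nil => simp
  | cons i l ih =>
    have hgi : Commute (g i) (l.map f).prod :=
      Commute.list_prod_right _ _ (by simpa using fun j _ => h i j)
    simp only [map_cons, prod_cons, ih, mul_assoc, hgi.left_comm]

theorem prod_map_const_mul (l : List ι) {z : M} {g : ι → M} (h : ∀ i, Commute (g i) z) :
    (l.map fun i => z * g i).prod = z ^ l.length * (l.map g).prod := by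
  rw [prod_map_mul_of_commute l (f := fun _ => z) fun i _ => h i, map_const', prod_replicate]

theorem semiconjBy_prod_map (l : List ι) {a : M} {f g : ι → M}
    (h : ∀ i, SemiconjBy a (f i) (g i)) : SemiconjBy a (l.map f).prod (l.map g).prod := by
  induction l with
  | nil => exact SemiconjBy.one_right a
  | cons i l ih => exact (h i).mul_right ih

theorem prod_map_range_reflect {f : ℕ → M} (h : ∀ i j, Commute (f i) (f j)) (m : ℕ) :
    ((range m).map fun ℓ => f (m - 1 - ℓ)).prod = ((range m).map f).prod := by
  have hrev : ((range m).map fun ℓ => f (m - 1 - ℓ)) = ((range m).map f).reverse := by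
    conv_rhs => rw [← map_reverse, range_eq_range', reverse_range', map_map]
    simp [Function.comp_def]
  rw [hrev]
  exact ((reverse_perm _).symm.prod_eq' (pairwise_map.2 (pairwise_of_forall h))).symm

theorem prod_map_range_pow_two_mul_add_one (q : M) (m : ℕ) :
    ((range m).map fun ℓ => q ^ (2 * ℓ + 1)).prod = q ^ (m * m) := by
  induction m with
  | zero => simp
  | succ m ih => rw [prod_range_succ, ih, ← pow_add]; ring_nf

end List

theorem HasSum.semiconjBy {ι R : Type*} [Semiring R] [TopologicalSpace R] [IsTopologicalSemiring R]
    [T2Space R] {f g : ι → R} {a S T : R} (hf : HasSum f S) (hg : HasSum g T)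
    (h : ∀ i, SemiconjBy a (f i) (g i)) : SemiconjBy a S T := by
  have hfa : HasSum (fun i => g i * a) (a * S) := by
    simpa only [fun i => (h i).eq] using hf.mul_left a
  exact hfa.unique (hg.mul_right a)

theorem SemiconjBy.hasSum_coeff_mul_pow {R : Type*} [Semiring R] [TopologicalSpace R]
    [IsTopologicalSemiring R] [T2Space R] {c : ℕ → R} {a x x' S S' : R}
    (hc : ∀ n, Commute a (c n)) (hax : SemiconjBy a x x')
    (hS : HasSum (fun n => c n * x ^ n) S) (hS' : HasSum (fun n => c n * x' ^ n) S') :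
    SemiconjBy a S S' :=
  hS.semiconjBy hS' fun n => SemiconjBy.mul_right (hc n) (hax.pow_right n)

section QuantumDilogarithm

variable {B : Type*} [Ring B]

structure IsQDilogCoeffs (q : B) (c : ℕ → B) : Prop where
  q_commute : ∀ b, Commute q b
  coeff_commute : ∀ n b, Commute (c n) b
  coeff_succ_mul : ∀ n, c (n + 1) * (q ^ (2 * (n + 1)) - 1) = q * c n

def dilogRatio (q x : B) (m : ℕ) : B :=
  ((range m).map fun ℓ => 1 + q ^ (2 * ℓ + 1) * x).prod

theorem dilogRatio_succ (q x : B) (m : ℕ) :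
    dilogRatio q x (m + 1) = dilogRatio q x m * (1 + q ^ (2 * m + 1) * x) :=
  prod_range_succ _ _

theorem Commute.dilogRatio_right {z q x : B} (hq : Commute z q) (hx : Commute z x) (m : ℕ) :
    Commute z (dilogRatio q x m) :=
  Commute.list_prod_right _ _ <| by
    simpa using fun ℓ _ => (Commute.one_right z).add_right ((hq.pow_right _).mul_right hx)

section CentralFactors

variable {q t s u x : B}

theorem prod_add_mul_pow_eq_pow_mul_dilogRatio (hq : ∀ b, Commute q b) (ht : ∀ b, Commute t b)
    (hts : t * u = s) (m : ℕ) :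
    ((range m).map fun ℓ => t + s * q ^ (2 * ℓ + 1) * x).prod
      = t ^ m * dilogRatio q (u * x) m := by
  have hfactor : ∀ ℓ, t + s * q ^ (2 * ℓ + 1) * x
      = t * (1 + q ^ (2 * ℓ + 1) * (u * x)) := by
    intro ℓ
    rw [mul_add, mul_one, ← hts, ((hq u).pow_left _).left_comm]
    simp only [mul_assoc]
  rw [map_congr_left fun ℓ _ => hfactor ℓ, prod_map_const_mul _ fun ℓ => (ht _).symm,
    length_range]
  rfl

theorem prod_pow_add_pow_mul_eq_pow_mul_dilogRatio (hq : ∀ b, Commute q b) (m : ℕ) :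
    ((range m).map fun ℓ => q ^ (2 * ℓ + 1) + q ^ (2 * m) * x).prod
      = q ^ (m * m) * dilogRatio q x m := by
  have hfactor : ∀ ℓ ∈ range m, q ^ (2 * ℓ + 1) + q ^ (2 * m) * x
      = q ^ (2 * ℓ + 1) * (1 + q ^ (2 * (m - 1 - ℓ) + 1) * x) := by
    intro ℓ hℓ
    have hexp : 2 * m = 2 * ℓ + 1 + (2 * (m - 1 - ℓ) + 1) := by
      have := mem_range.mp hℓ
      omega
    rw [mul_add, mul_one, hexp, pow_add _ (2 * ℓ + 1), mul_assoc]
  have hcomm : ∀ i j, Commute (1 + q ^ (2 * i + 1) * x) (1 + q ^ (2 * j + 1) * x) := fun i j =>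
    (Commute.one_left _).add_left <| (Commute.one_right _).add_right <|
      ((hq _).pow_left _).mul_left (((hq x).symm.pow_right _).mul_right (Commute.refl x))
  rw [map_congr_left hfactor, prod_map_mul_of_commute _ fun i j => ((hq _).pow_left _).symm,
    prod_map_range_pow_two_mul_add_one,
    prod_map_range_reflect (f := fun ℓ => 1 + q ^ (2 * ℓ + 1) * x) hcomm]
  rfl

theorem pow_mul_prod_add_mul_inv {X : Bˣ} (hq : ∀ b, Commute q b) (ht : ∀ b, Commute t b)
    (hu : ∀ b, Commute u b) (hts : t * u = s) (m : ℕ) :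
    (X : B) ^ m * ((range m).map fun ℓ => s + t * q ^ (2 * ℓ + 1) * ((X⁻¹ : Bˣ) : B)).prod
      = t ^ m * ((range m).map fun ℓ => q ^ (2 * ℓ + 1) + u * X).prod := by
  have hX : ∀ ℓ, Commute (s + t * q ^ (2 * ℓ + 1) * ((X⁻¹ : Bˣ) : B)) X := fun ℓ => by
    rw [← hts]
    exact ((ht _).mul_left (hu _)).add_left (((ht _).mul_left ((hq _).pow_left _)).mul_left
      (Commute.refl (X : B)).units_inv_left)
  have hfactor : ∀ ℓ, (X : B) * (s + t * q ^ (2 * ℓ + 1) * ((X⁻¹ : Bˣ) : B))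
      = t * (q ^ (2 * ℓ + 1) + u * X) := by
    intro ℓ
    have hXs : (X : B) * (t * u) = t * (u * X) := by rw [(ht X).symm.left_comm, (hu X).symm.eq]
    have hXinv : (X : B) * (t * q ^ (2 * ℓ + 1) * ((X⁻¹ : Bˣ) : B))
        = t * q ^ (2 * ℓ + 1) := by
      rw [← mul_assoc, ← ((ht X).mul_left ((hq X).pow_left _)).eq, mul_assoc, Units.mul_inv,
        mul_one]
    rw [mul_add, ← hts, hXs, hXinv, mul_add, add_comm]
  calc _ = ((range m).map fun ℓ =>
          (X : B) * (s + t * q ^ (2 * ℓ + 1) * ((X⁻¹ : Bˣ) : B))).prod := by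
        rw [prod_map_const_mul _ hX, length_range]
    _ = ((range m).map fun ℓ => t * (q ^ (2 * ℓ + 1) + u * X)).prod := by
        rw [map_congr_left fun ℓ _ => hfactor ℓ]
    _ = t ^ m * ((range m).map fun ℓ => q ^ (2 * ℓ + 1) + u * X).prod := by
        rw [prod_map_const_mul _ fun ℓ => (ht _).symm, length_range]

theorem commute_prod_add_mul_inv {X : Bˣ} (hq : ∀ b, Commute q b) (ht : ∀ b, Commute t b)
    (hu : ∀ b, Commute u b) (hts : t * u = s) (m : ℕ) :
    Commute ((range m).map fun ℓ => s + t * q ^ (2 * ℓ + 1) * ((X⁻¹ : Bˣ) : B)).prod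
      (u * X) := by
  refine Commute.list_prod_left _ _ fun z hz => ?_
  obtain ⟨ℓ, -, rfl⟩ := mem_map.mp hz
  rw [← hts]
  exact ((ht _).mul_left (hu _)).add_left (((ht _).mul_left ((hq _).pow_left _)).mul_left
    ((hu _).symm.mul_right (.refl _)).units_inv_left)

theorem SemiconjBy.mul_pow_mul_prod_add_mul_inv {a : B} {X : Bˣ} {m : ℕ}
    (ha : SemiconjBy a (u * X) (q ^ (2 * m) * (u * X))) (hq : ∀ b, Commute q b)
    (ht : ∀ b, Commute t b) (hu : ∀ b, Commute u b) (hts : t * u = s) :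
    a * ((X : B) ^ m *
        ((range m).map fun ℓ => s + t * q ^ (2 * ℓ + 1) * ((X⁻¹ : Bˣ) : B)).prod)
      = q ^ (m * m) * t ^ m * (dilogRatio q (u * X) m * a) := by
  have hfactor : ∀ ℓ, SemiconjBy a (q ^ (2 * ℓ + 1) + u * X)
      (q ^ (2 * ℓ + 1) + q ^ (2 * m) * (u * X)) := fun ℓ =>
    SemiconjBy.add_right ((hq a).pow_left _).symm ha
  rw [pow_mul_prod_add_mul_inv hq ht hu hts m, ((ht a).pow_left m).symm.left_comm,
    (semiconjBy_prod_map _ hfactor).eq, prod_pow_add_pow_mul_eq_pow_mul_dilogRatio hq]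
  simp only [mul_assoc]
  exact ((ht _).pow_left m).left_comm _

end CentralFactors

namespace IsQDilogCoeffs

variable {q : B} {c : ℕ → B}

theorem coeff_succ_mul_pow (h : IsQDilogCoeffs q c) (x : B) (n : ℕ) :
    c (n + 1) * (q ^ 2 * x) ^ (n + 1) = c (n + 1) * x ^ (n + 1) + q * x * (c n * x ^ n) := by
  have hrec : c (n + 1) * q ^ (2 * (n + 1)) = c (n + 1) + q * c n := by
    rw [← sub_eq_iff_eq_add', ← h.coeff_succ_mul n, mul_sub, mul_one]
  rw [((h.q_commute x).pow_left 2).mul_pow, ← pow_mul, ← mul_assoc, hrec, add_mul, pow_succ' x,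
    mul_assoc q, ← mul_assoc (c n), (h.coeff_commute n x).eq]
  simp only [mul_assoc]

variable [TopologicalSpace B] [IsTopologicalRing B]

theorem hasSum_mul_sq (h : IsQDilogCoeffs q c) {x S : B}
    (hS : HasSum (fun n => c n * x ^ n) S) :
    HasSum (fun n => c n * (q ^ 2 * x) ^ n) ((1 + q * x) * S) := by
  refine (hasSum_nat_add_iff' 1).mp ?_
  have htail := (hasSum_nat_add_iff' 1).mpr hS
  simp only [h.coeff_succ_mul_pow, Finset.range_one, Finset.sum_singleton, pow_zero, mul_one]
    at htail ⊢
  convert htail.add (hS.mul_left (q * x)) using 1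
  noncomm_ring

theorem hasSum_mul_sq_pow (h : IsQDilogCoeffs q c) {x S : B}
    (hS : HasSum (fun n => c n * x ^ n) S) (m : ℕ) :
    HasSum (fun n => c n * (q ^ (2 * m) * x) ^ n) (dilogRatio q x m * S) := by
  induction m with
  | zero => simpa [dilogRatio] using hS
  | succ m ih =>
    have hfactor : Commute (1 + q ^ (2 * m + 1) * x) (dilogRatio q x m) :=
      Commute.dilogRatio_right ((Commute.one_left q).add_left ((h.q_commute _).symm))
        ((Commute.one_left x).add_left (((h.q_commute x).pow_left _).mul_left (.refl x))) m
    have hpow : q ^ 2 * (q ^ (2 * m) * x) = q ^ (2 * (m + 1)) * x := by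
      rw [← mul_assoc, ← pow_add, add_comm, mul_add_one]
    have hsum : (1 + q * (q ^ (2 * m) * x)) * (dilogRatio q x m * S)
        = dilogRatio q x (m + 1) * S := by
      rw [dilogRatio_succ, ← hfactor.eq, ← mul_assoc q, ← pow_succ', mul_assoc]
    simpa only [hpow, hsum] using h.hasSum_mul_sq ih

end IsQDilogCoeffs

section Conjugation

variable [TopologicalSpace B] [IsTopologicalRing B] [T2Space B] {c : ℕ → B} {U tp Xi : B}
  {tm Xk Ψ P : Bˣ}

theorem IsQDilogCoeffs.conj_monomial_of_neg {q : B} (h : IsQDilogCoeffs q c)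
    (htm : ∀ b, Commute (tm : B) b) (hU : ∀ b, Commute U b) (htmU : tm * U = tp) (m : ℕ)
    (hrel : (Xk : B) * Xi = q ^ (2 * m) * (Xi * Xk))
    (hΨ : HasSum (fun n => c n * (U * Xk) ^ n) Ψ)
    (hP : (P : B) = ((range m).map fun ℓ => (tm : B) + tp * q ^ (2 * ℓ + 1) * Xk).prod) :
    Ψ * ((tm : B) ^ m * Xi) * ((Ψ⁻¹ : Bˣ) : B) = Xi * P := by
  have hsemi : SemiconjBy Xi (q ^ (2 * m) * (U * Xk)) (U * Xk) := by
    rw [SemiconjBy, ((h.q_commute Xi).pow_left _).symm.left_comm, (hU Xi).symm.left_comm,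
      mul_assoc, hrel, ((h.q_commute U).pow_left _).left_comm]
  have hshift : Xi * (dilogRatio q (U * Xk) m * Ψ) = Ψ * Xi :=
    SemiconjBy.hasSum_coeff_mul_pow (fun n => (h.coeff_commute n Xi).symm) hsemi
      (h.hasSum_mul_sq_pow hΨ m) hΨ
  have hPG : (P : B) = (tm : B) ^ m * dilogRatio q (U * Xk) m :=
    hP.trans (prod_add_mul_pow_eq_pow_mul_dilogRatio h.q_commute htm htmU m)
  rw [Units.mul_inv_eq_iff_eq_mul, hPG, ((htm Ψ).pow_left m).symm.left_comm, ← hshift,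
    ((htm Xi).pow_left m).left_comm]
  simp only [mul_assoc]

theorem IsQDilogCoeffs.conj_monomial_of_pos {q : Bˣ} (h : IsQDilogCoeffs (q : B) c)
    (htm : ∀ b, Commute (tm : B) b) (hU : ∀ b, Commute U b) (htmU : tm * U = tp) (m : ℕ)
    (hrel : (Xk : B) * Xi = ((q ^ (2 * m))⁻¹ : Bˣ) * (Xi * Xk))
    (hΨ : HasSum (fun n => c n * (U * Xk) ^ n) Ψ)
    (hP : (P : B) = ((range m).map fun ℓ =>
      tp + tm * (q : B) ^ (2 * ℓ + 1) * ((Xk⁻¹ : Bˣ) : B)).prod) :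
    Ψ * (((tm ^ m)⁻¹ : Bˣ) * ((q ^ (m * m))⁻¹ : Bˣ) * (Xi * (Xk ^ m : Bˣ)))
      * ((Ψ⁻¹ : Bˣ) : B) = Xi * ((P⁻¹ : Bˣ) : B) := by
  replace hrel : (q : B) ^ (2 * m) * (Xk * Xi) = Xi * Xk := by
    rw [hrel, ← mul_assoc, ← Units.val_pow_eq_pow_val, Units.mul_inv, one_mul]
  have hsemi : SemiconjBy Xi (U * Xk) ((q : B) ^ (2 * m) * (U * Xk)) := by
    rw [SemiconjBy, (hU Xi).symm.left_comm, ← hrel, (hU _).left_comm]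
    simp only [mul_assoc]
  have hshift : Xi * Ψ = dilogRatio (q : B) (U * Xk) m * Ψ * Xi :=
    SemiconjBy.hasSum_coeff_mul_pow (fun n => (h.coeff_commute n Xi).symm) hsemi hΨ
      (h.hasSum_mul_sq_pow hΨ m)
  have hGΨ : Commute (dilogRatio (q : B) (U * Xk) m) Ψ :=
    SemiconjBy.hasSum_coeff_mul_pow (fun n => (h.coeff_commute n _).symm)
      (Commute.dilogRatio_right (h.q_commute _).symm (.refl _) m).symm hΨ hΨ
  have hPy : Commute (P : B) (U * Xk) :=
    hP ▸ commute_prod_add_mul_inv h.q_commute htm hU htmU m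
  have hPΨ : Commute (P : B) Ψ :=
    SemiconjBy.hasSum_coeff_mul_pow (fun n => (h.coeff_commute n _).symm) hPy hΨ hΨ
  have hkey : Xi * ((Xk : B) ^ m * P)
      = ((q ^ (m * m) * tm ^ m : Bˣ) : B) * (dilogRatio (q : B) (U * Xk) m * Xi) := by
    rw [hP, hsemi.mul_pow_mul_prod_add_mul_inv h.q_commute htm hU htmU, Units.val_mul,
      Units.val_pow_eq_pow_val, Units.val_pow_eq_pow_val]
  have hV : ∀ b, Commute ((q ^ (m * m) * tm ^ m : Bˣ) : B) b := fun b => by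
    rw [Units.val_mul, Units.val_pow_eq_pow_val, Units.val_pow_eq_pow_val]
    exact ((h.q_commute b).pow_left _).mul_left ((htm b).pow_left _)
  rw [Units.val_pow_eq_pow_val Xk, ← Units.val_mul, ← mul_inv_rev, Units.mul_inv_eq_iff_eq_mul,
    mul_assoc Xi, hPΨ.units_inv_left.eq, ← mul_assoc Xi, Units.eq_mul_inv_iff_mul_eq]
  calc Ψ * (((q ^ (m * m) * tm ^ m)⁻¹ : Bˣ) * (Xi * (Xk : B) ^ m)) * P
      = ((q ^ (m * m) * tm ^ m)⁻¹ : Bˣ) * (Ψ * (Xi * ((Xk : B) ^ m * P))) := by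
        rw [((hV Ψ).units_inv_left).symm.left_comm]
        simp only [mul_assoc]
    _ = Ψ * (dilogRatio (q : B) (U * Xk) m * Xi) := by
        rw [hkey, (hV Ψ).symm.left_comm, Units.inv_mul_cancel_left]
    _ = Xi * Ψ := by rw [hshift, hGΨ.eq, mul_assoc]

end Conjugation

end QuantumDilogarithm

theorem quantum_X_mutation_with_coefficients_general {B : Type*} [Ring B] [TopologicalSpace B]
    [IsTopologicalRing B] [T2Space B]
    (qk tp tm : Bˣ)
    (hqk : ∀ b : B, Commute (qk : B) b)
    (htp : ∀ b : B, Commute (tp : B) b)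
    (htm : ∀ b : B, Commute (tm : B) b)
    (ε : ℤ) (Xi : B) (Xk : Bˣ)
    (hrel : (Xk : B) * Xi = ((qk ^ (-(2 * ε)) : Bˣ) : B) * (Xi * (Xk : B)))
    (c : ℕ → B)
    (hcrec : ∀ n : ℕ, c (n + 1) * ((qk : B) ^ (2 * (n + 1)) - 1) = (qk : B) * c n)
    (hcc : ∀ (n : ℕ) (b : B), Commute (c n) b)
    (Ψ : Bˣ)
    (hΨ : HasSum (fun n : ℕ => c n * (((tp * tm⁻¹ : Bˣ) : B) * (Xk : B)) ^ n) (Ψ : B))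
    (P : Bˣ)
    (hP : (P : B) = ((List.range ε.natAbs).map (fun ℓ =>
      (if 0 ≤ ε then (tp : B) else (tm : B)) +
        (if 0 ≤ ε then (tm : B) else (tp : B)) * (qk : B) ^ (2 * ℓ + 1) *
          ((Xk ^ (-(Int.sign ε)) : Bˣ) : B))).prod) :
    ((Ψ : B) * ((Xk⁻¹ : Bˣ) : B) * ((Ψ⁻¹ : Bˣ) : B) = ((Xk⁻¹ : Bˣ) : B)) ∧
    ((Ψ : B) * (((tm ^ (-ε) : Bˣ) : B) * ((qk ^ (-(ε * max ε 0)) : Bˣ) : B) *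
        (Xi * ((Xk ^ max ε 0 : Bˣ) : B))) * ((Ψ⁻¹ : Bˣ) : B) =
      Xi * ((P ^ (-(Int.sign ε)) : Bˣ) : B)) := by
  have hcoeff : IsQDilogCoeffs (qk : B) c := ⟨hqk, hcc, hcrec⟩
  have hU : ∀ b, Commute ((tp * tm⁻¹ : Bˣ) : B) b := fun b => by
    simpa only [Units.val_mul] using (htp b).mul_left (htm b).units_inv_left
  have htmU : (tm : B) * ((tp * tm⁻¹ : Bˣ) : B) = tp := by
    rw [Units.val_mul, (htm _).left_comm, Units.mul_inv, mul_one]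
  have hXkΨ : Commute (Xk : B) Ψ := SemiconjBy.hasSum_coeff_mul_pow (fun n => (hcc n _).symm)
    ((hU _).symm.mul_right (.refl _)) hΨ hΨ
  refine ⟨by rw [← hXkΨ.units_inv_left.eq, Units.mul_inv_cancel_right], ?_⟩
  rcases lt_trichotomy ε 0 with hε | rfl | hε
  · obtain ⟨m, rfl⟩ : ∃ m : ℕ, ε = -m := ⟨ε.natAbs, by omega⟩
    rw [show -(2 * -(m : ℤ)) = ((2 * m : ℕ) : ℤ) by push_cast; ring] at hrel
    simp only [Int.sign_eq_neg_one_of_neg hε, Int.natAbs_neg, Int.natAbs_natCast,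
      if_neg (not_le.mpr hε), max_eq_right hε.le, neg_neg, mul_zero, neg_zero, zpow_natCast,
      zpow_zero, zpow_one, Units.val_pow_eq_pow_val, Units.val_one, mul_one] at hrel hP ⊢
    exact hcoeff.conj_monomial_of_neg htm hU htmU m hrel hΨ hP
  · have hXiΨ : Commute Xi Ψ := SemiconjBy.hasSum_coeff_mul_pow (fun n => (hcc n _).symm)
      ((hU Xi).symm.mul_right (show Xi * Xk = Xk * Xi by simpa using hrel.symm)) hΨ hΨ
    simp only [neg_zero, mul_zero, zpow_zero, Units.val_one, mul_one, one_mul, max_self,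
      Int.sign_zero]
    rw [← hXiΨ.eq, Units.mul_inv_cancel_right]
  · obtain ⟨m, rfl⟩ : ∃ m : ℕ, ε = m := ⟨ε.natAbs, by omega⟩
    rw [show -(2 * (m : ℤ)) = -((2 * m : ℕ) : ℤ) by push_cast; ring] at hrel
    simp only [Int.sign_eq_one_of_pos hε, Int.natAbs_natCast, if_pos hε.le, max_eq_left hε.le,
      ← Nat.cast_mul, zpow_neg, zpow_natCast, zpow_one] at hrel hP ⊢
    exact hcoeff.conj_monomial_of_pos htm hU htmU m hrel hΨ hP

/-- The quantum `𝒳`-mutation with coefficients, `μ^q_{k,𝐭} = μ^♯_{k,𝐭} ∘ μ'_{k,𝐭}`, computed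
in cluster coordinates.  Here the quantum torus satisfies
`X̃_k X̃_i = q_k^{−2ε_{ik}} X̃_i X̃_k` with central units `q_k = q^{1/d_k}`,
`tp = 𝐭^{[c_k]_+}`, `tm = 𝐭^{[−c_k]_+}`; the coefficient quantum dilogarithm
`Ψ_{q_k}((tp/tm)·X̃_k) = ∑_n c_n ((tp/tm)X̃_k)^n` (with `c_0 = 1`,
`c_n(q_k^{2n} − 1) = q_k c_{n−1}`, the sum converging in a Hausdorff topological ring) defines
`μ^♯` by conjugation, while `μ'` sends `X̃_{k;𝒢'} ↦ X̃_{k;𝒢}^{−1}` and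
`X̃_{i;𝒢'} ↦ 𝐭^{−ε_{ik}[−c_k]_+} q^{−ε̂_{ik}[ε_{ik}]_+} X̃_{i;𝒢} X̃_{k;𝒢}^{[ε_{ik}]_+}`
(the prefactors being `tm^{−ε_{ik}}` and `q_k^{−ε_{ik}[ε_{ik}]_+}`).  The composition gives:
`μ^q(X̃_{k;𝒢'}) = X̃_{k;𝒢}^{−1}`, and for `i ≠ k`,
`μ^q(X̃_{i;𝒢'}) = X̃_{i;𝒢}·(∏_{ℓ=1}^{|ε_{ik}|}(𝐭^{[sgn(ε)c_k]_+} + 𝐭^{[−sgn(ε)c_k]_+}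
q_k^{2ℓ−1} X̃_{k;𝒢}^{−sgn(ε)}))^{−sgn(ε)}`. -/
theorem quantum_X_mutation_with_coefficients {B : Type*} [Ring B] [TopologicalSpace B]
    [IsTopologicalRing B] [T2Space B]
    (qk tp tm : Bˣ)
    (hqk : ∀ b : B, Commute (qk : B) b)
    (htp : ∀ b : B, Commute (tp : B) b)
    (htm : ∀ b : B, Commute (tm : B) b)
    (ε : ℤ) (Xi : B) (Xk : Bˣ)
    (hrel : (Xk : B) * Xi = ((qk ^ (-(2 * ε)) : Bˣ) : B) * (Xi * (Xk : B)))
    (c : ℕ → B) (hc0 : c 0 = 1)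
    (hcrec : ∀ n : ℕ, c (n + 1) * ((qk : B) ^ (2 * (n + 1)) - 1) = (qk : B) * c n)
    (hcc : ∀ (n : ℕ) (b : B), Commute (c n) b)
    (Ψ : Bˣ)
    (hΨ : HasSum (fun n : ℕ => c n * (((tp * tm⁻¹ : Bˣ) : B) * (Xk : B)) ^ n) (Ψ : B))
    (P : Bˣ)
    (hP : (P : B) = ((List.range ε.natAbs).map (fun ℓ =>
      (if 0 ≤ ε then (tp : B) else (tm : B)) +
        (if 0 ≤ ε then (tm : B) else (tp : B)) * (qk : B) ^ (2 * ℓ + 1) *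
          ((Xk ^ (-(Int.sign ε)) : Bˣ) : B))).prod) :
    ((Ψ : B) * ((Xk⁻¹ : Bˣ) : B) * ((Ψ⁻¹ : Bˣ) : B) = ((Xk⁻¹ : Bˣ) : B)) ∧
    ((Ψ : B) * (((tm ^ (-ε) : Bˣ) : B) * ((qk ^ (-(ε * max ε 0)) : Bˣ) : B) *
        (Xi * ((Xk ^ max ε 0 : Bˣ) : B))) * ((Ψ⁻¹ : Bˣ) : B) =
      Xi * ((P ^ (-(Int.sign ε)) : Bˣ) : B)) :=
  quantum_X_mutation_with_coefficients_general qk tp tm hqk htp htm ε Xi Xk hrel c hcrec hcc Ψ hΨ P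
    hP
end

section
/- The classical X-mutation with coefficients preserves the Poisson bracket {X^{v₁}, X^{v₂}}_𝒢 = 2{v₁,v₂}X^{v₁+v₂}: for all i, j, {μ*(X̃_{i;𝒢'}), μ*(X̃_{j;𝒢'})}_𝒢 = μ*({X̃_{i;𝒢'}, X̃_{j;𝒢'}}_{𝒢'}), where μ*(X̃_{k;𝒢'}) = X̃_{k;𝒢}^{−1} and μ*(X̃_{i;𝒢'}) = X̃_{i;𝒢}(t^{[sgn(ε_{ik})c_k]_+} + t^{[−sgn(ε_{ik})c_k]_+} X̃_{k;𝒢}^{−sgn(ε_{ik})})^{−ε_{ik}} for i ≠ k. -/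
open scoped BigOperators

/-!
Brackets of units are governed by the log-bracket `L(u, v) = {u, v} u⁻¹ v⁻¹`, which is
antisymmetric and additive in each argument under multiplication of units. With the Casimir
binomial `β = tp + tm X_k⁻¹`, each pulled-back variable is the monomial
`X_i X_k^{[-ε_i]_+} β^{-ε_i}` (and `X_k⁻¹` for `i = k`), while `L(X_a, β) = -2{e_a, e_k} θ` for a
fixed `θ` and `L(X_k, β) = L(β, β) = 0`. Hence `L(μ*X̃_i', μ*X̃_j')` is
`2{e_i + [-ε_i]_+ e_k, e_j + [-ε_j]_+ e_k}` plus `θ`-terms proportional to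
`ε_j{e_i, e_k} - ε_i{e_j, e_k} = 0`, since `ε_{ik} = {e_i, e_k} d_k`; the same relation
lets `[-ε]_+` be replaced by `[ε]_+ = [-ε]_+ + ε`.
-/

/-- Coordinates of the mutated basis vectors: `e_{k;𝒢'} = −e_{k;𝒢}` and
`e_{i;𝒢'} = e_{i;𝒢} + [ε_{ik}]_+ e_{k;𝒢}` for `i ≠ k`. -/
def mutatedBasisCoords (n : ℕ) (k : Fin n) (ε : Fin n → ℤ) : Fin n → Fin n → ℚ :=
  fun i a =>
    if i = k then (if a = k then -1 else 0)
    else (if a = i then (1 : ℚ) else 0) + (if a = k then ((max (ε i) 0 : ℤ) : ℚ) else 0)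

structure IsSkewBiderivation {A : Type*} [CommRing A] (P : A → A → A) : Prop where
  map_add_right : ∀ f g h, P f (g + h) = P f g + P f h
  antisymm : ∀ f g, P f g = -P g f
  leibniz_right : ∀ f g h, P f (g * h) = g * P f h + h * P f g

def logBracket {A : Type*} [CommRing A] (P : A → A → A) (u v : Aˣ) : A :=
  P u v * ↑u⁻¹ * ↑v⁻¹

section LogBracket

variable {A : Type*} [CommRing A] {P : A → A → A}

theorem apply_units_eq_logBracket_mul (P : A → A → A) (u v : Aˣ) :
    P u v = logBracket P u v * (u * v) := by
  rw [logBracket]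
  linear_combination (-(P u v) * ↑v⁻¹ * ↑v) * u.inv_mul - P u v * v.inv_mul

theorem logBracket_eq_of_apply_eq {u v : Aˣ} {c : A} (h : P u v = c * (u * v)) :
    logBracket P u v = c := by
  rw [logBracket, h]
  linear_combination (c * ↑v * ↑v⁻¹) * u.mul_inv + c * v.mul_inv

namespace IsSkewBiderivation

variable (hP : IsSkewBiderivation P)
include hP

theorem logBracket_mul_right (u v w : Aˣ) :
    logBracket P u (v * w) = logBracket P u v + logBracket P u w := by
  simp only [logBracket, Units.val_mul, hP.leibniz_right, mul_inv]
  linear_combination (P u w * ↑u⁻¹ * ↑w⁻¹) * v.mul_inv + (P u v * ↑u⁻¹ * ↑v⁻¹) * w.mul_inv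

theorem logBracket_zpow_right (u v : Aˣ) (m : ℤ) :
    logBracket P u (v ^ m) = m * logBracket P u v := by
  let f : Additive Aˣ →+ A :=
    AddMonoidHom.mk' (fun v ↦ logBracket P u v.toMul) (hP.logBracket_mul_right u)
  exact (map_zsmul f m (Additive.ofMul v)).trans (zsmul_eq_mul _ _)

theorem logBracket_swap (u v : Aˣ) : logBracket P u v = -logBracket P v u := by
  rw [logBracket, logBracket, hP.antisymm]
  ring

theorem logBracket_mul_left (u v w : Aˣ) :
    logBracket P (u * v) w = logBracket P u w + logBracket P v w := by
  rw [hP.logBracket_swap, hP.logBracket_mul_right, hP.logBracket_swap w, hP.logBracket_swap w]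
  ring

theorem logBracket_zpow_left (u v : Aˣ) (m : ℤ) :
    logBracket P (u ^ m) v = m * logBracket P u v := by
  rw [hP.logBracket_swap, hP.logBracket_zpow_right, hP.logBracket_swap v]
  ring

theorem logBracket_inv_left (u v : Aˣ) : logBracket P u⁻¹ v = -logBracket P u v := by
  simpa using hP.logBracket_zpow_left u v (-1)

theorem logBracket_inv_right (u v : Aˣ) : logBracket P u v⁻¹ = -logBracket P u v := by
  simpa using hP.logBracket_zpow_right u v (-1)

theorem logBracket_self [Algebra ℚ A] (u : Aˣ) : logBracket P u u = 0 := by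
  have h : (2 : ℚ) • logBracket P u u = 0 := by
    rw [two_smul]
    linear_combination hP.logBracket_swap u u
  exact (smul_eq_zero.mp h).resolve_left two_ne_zero

theorem logBracket_eq_of_val_eq_add_mul {c d : A} (hc : ∀ a, P c a = 0) (hd : ∀ a, P d a = 0)
    {u w β : Aˣ} (hβ : (β : A) = c + d * w) :
    logBracket P u β = logBracket P u w * (d * w * ↑β⁻¹) := by
  have h : P u β = d * P u w := by
    rw [hβ, hP.map_add_right, hP.leibniz_right, hP.antisymm u c, hc, hP.antisymm u d, hd]
    ring
  rw [logBracket, logBracket, h]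
  linear_combination (-(d * P u w * ↑u⁻¹ * ↑β⁻¹)) * w.inv_mul

theorem logBracket_mul_zpow_mul_zpow [Algebra ℚ A] {x y K β : Aˣ}
    (hKβ : logBracket P K β = 0) (p q m r : ℤ) :
    logBracket P (x * (K ^ p * β ^ m)) (y * (K ^ q * β ^ r)) =
      logBracket P x y + q * logBracket P x K + r * logBracket P x β +
        p * logBracket P K y + m * logBracket P β y := by
  have hβK : logBracket P β K = 0 := by rw [hP.logBracket_swap, hKβ, neg_zero]
  simp only [hP.logBracket_mul_left, hP.logBracket_mul_right, hP.logBracket_zpow_left,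
    hP.logBracket_zpow_right, hP.logBracket_self, hKβ, hβK]
  ring

end IsSkewBiderivation

end LogBracket

section Mutation

variable {A : Type*} [CommRing A] {n : ℕ}

/-- `μ*(X̃_{i;𝒢'})`, as a unit of the chart `𝒢`. -/
def mutationPullback (X bu : Fin n → Aˣ) (k : Fin n) (ε : Fin n → ℤ) (i : Fin n) : Aˣ :=
  if i = k then (X k)⁻¹ else X i * bu i ^ (-ε i)

theorem val_mutationPullback (X bu : Fin n → Aˣ) (k : Fin n) (ε : Fin n → ℤ) (i : Fin n) :
    (mutationPullback X bu k ε i : A) =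
      if i = k then (((X k)⁻¹ : Aˣ) : A) else (X i : A) * ((bu i ^ (-(ε i)) : Aˣ) : A) := by
  unfold mutationPullback
  split_ifs <;> rfl

theorem zpow_neg_eq_of_val_eq {tp tm : A} {u K β : Aˣ} (e : ℤ)
    (hβ : (β : A) = tp + tm * ↑K⁻¹)
    (hu : (u : A) = if 0 ≤ e then tp + tm * ↑K⁻¹ else tm + tp * K) :
    u ^ (-e) = K ^ max (-e) 0 * β ^ (-e) := by
  split_ifs at hu with he
  · rw [max_eq_right (by omega), zpow_zero, one_mul, Units.ext (hu.trans hβ.symm)]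
  · have hKβ : u = K * β := by
      ext
      rw [Units.val_mul, hu, hβ]
      linear_combination -tm * K.mul_inv
    rw [max_eq_left (by omega), hKβ, mul_zpow]

theorem sum_mutatedBasisCoords (B : Fin n → Fin n → ℚ) (hB : ∀ i j, B i j = -B j i)
    (k : Fin n) (ε : Fin n → ℤ) (i j : Fin n) :
    ∑ a, ∑ c, mutatedBasisCoords n k ε i a * mutatedBasisCoords n k ε j c * B a c =
      if i = k then (if j = k then 0 else -B k j) else
        if j = k then -B i k else
          B i j + ((max (ε j) 0 : ℤ) : ℚ) * B i k - ((max (ε i) 0 : ℤ) : ℚ) * B j k := by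
  have hkk : B k k = 0 := by linarith [hB k k]
  split_ifs with hi hj hj <;>
    simp only [mutatedBasisCoords, hi, hj, ↓reduceIte, Int.cast_max, Int.cast_zero, mul_add,
      add_mul, mul_ite, ite_mul, mul_one, mul_zero, one_mul, zero_mul, mul_neg, neg_mul,
      Finset.sum_add_distrib, Finset.sum_neg_distrib, Finset.sum_ite_eq', Finset.mem_univ, hkk,
      neg_zero, add_zero]
  rw [hB k j]
  ring

theorem logBracket_mutationPullback [Algebra ℚ A] {P : A → A → A} (hP : IsSkewBiderivation P)
    (B : Fin n → Fin n → ℚ) (hB : ∀ i j, B i j = -B j i) (X : Fin n → Aˣ)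
    (hX : ∀ a b, logBracket P (X a) (X b) = algebraMap ℚ A (2 * B a b))
    {tp tm : A} (htp : ∀ a, P tp a = 0) (htm : ∀ a, P tm a = 0)
    (k : Fin n) (dk : ℚ) (ε : Fin n → ℤ) (hε : ∀ i, (ε i : ℚ) = B i k * dk)
    {β : Aˣ} (hβ : (β : A) = tp + tm * ↑(X k)⁻¹) (bu : Fin n → Aˣ)
    (hbu : ∀ i, (bu i : A) =
      if 0 ≤ ε i then tp + tm * (((X k)⁻¹ : Aˣ) : A) else tm + tp * (X k : A)) (i j : Fin n) :
    logBracket P (mutationPullback X bu k ε i) (mutationPullback X bu k ε j) =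
      algebraMap ℚ A
        (2 * ∑ a, ∑ c, mutatedBasisCoords n k ε i a * mutatedBasisCoords n k ε j c * B a c) := by
  have hkk : B k k = 0 := by linarith [hB k k]
  have hμ : ∀ b ≠ k,
      mutationPullback X bu k ε b = X b * (X k ^ max (-ε b) 0 * β ^ (-ε b)) := by
    intro b hb
    rw [mutationPullback, if_neg hb, zpow_neg_eq_of_val_eq _ hβ (hbu b)]
  set θ : A := tm * ↑(X k)⁻¹ * ↑β⁻¹
  have hXβ : ∀ a, logBracket P (X a) β = -algebraMap ℚ A (2 * B a k) * θ := by
    intro a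
    rw [hP.logBracket_eq_of_val_eq_add_mul htp htm hβ, hP.logBracket_inv_right, hX]
  have hβX : ∀ a, logBracket P β (X a) = algebraMap ℚ A (2 * B a k) * θ := by
    intro a
    rw [hP.logBracket_swap, hXβ]
    ring
  have hKβ : logBracket P (X k) β = 0 := by simp [hXβ, hkk]
  rw [sum_mutatedBasisCoords B hB]
  split_ifs with hi hj hj
  · simp [mutationPullback, hi, hj, hP.logBracket_inv_left, hP.logBracket_inv_right, hX, hkk]
  · rw [hμ j hj, mutationPullback, if_pos hi]
    simp only [hP.logBracket_inv_left, hP.logBracket_mul_right, hP.logBracket_zpow_right, hX,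
      hKβ, hkk]
    simp
  · rw [hμ i hi, mutationPullback, if_pos hj]
    simp only [hP.logBracket_inv_right, hP.logBracket_mul_left, hP.logBracket_zpow_left, hX,
      hβX, hkk]
    simp
  · have hrel : algebraMap ℚ A (ε j * B i k) = algebraMap ℚ A (ε i * B j k) :=
      congrArg _ (by linear_combination B i k * hε j - B j k * hε i)
    have hmax (e : ℤ) : ((max e 0 : ℤ) : A) = ((max (-e) 0 : ℤ) : A) + e := by
      rw [← Int.cast_add, sub_eq_iff_eq_add'.mp (max_zero_sub_max_neg_zero_eq_self e)]
    rw [hμ i hi, hμ j hj, hP.logBracket_mul_zpow_mul_zpow hKβ]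
    simp only [hX, hXβ, hβX, hB k j]
    simp only [map_mul, map_sub, map_add, map_ofNat, map_intCast, map_neg, Int.cast_neg] at hrel ⊢
    linear_combination (2 * θ - 2) * hrel - 2 * algebraMap ℚ A (B i k) * hmax (ε j)
      + 2 * algebraMap ℚ A (B j k) * hmax (ε i)

end Mutation

theorem classical_mutation_preserves_poisson_general {A : Type*} [CommRing A] [Algebra ℚ A]
    (P : A → A → A)
    (haddr : ∀ f g h : A, P f (g + h) = P f g + P f h)
    (hanti : ∀ f g : A, P f g = - P g f)
    (hleib : ∀ f g h : A, P f (g * h) = g * P f h + h * P f g)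
    (n : ℕ) (Bm : Fin n → Fin n → ℚ) (hskew : ∀ i j, Bm i j = - Bm j i)
    (X : Fin n → Aˣ)
    (hbr : ∀ i j, P ((X i : A)) ((X j : A)) = (2 * Bm i j) • ((X i : A) * (X j : A)))
    (tp tm : A) (htp : ∀ a : A, P tp a = 0) (htm : ∀ a : A, P tm a = 0)
    (k : Fin n) (dk : ℚ) (ε : Fin n → ℤ) (hε : ∀ i, (ε i : ℚ) = Bm i k * dk)
    (bu : Fin n → Aˣ)
    (hbu : ∀ i, (bu i : A) =
      if 0 ≤ ε i then tp + tm * (((X k)⁻¹ : Aˣ) : A) else tm + tp * (X k : A)) :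
    ∀ i j,
      P (if i = k then (((X k)⁻¹ : Aˣ) : A) else (X i : A) * ((bu i ^ (-(ε i)) : Aˣ) : A))
        (if j = k then (((X k)⁻¹ : Aˣ) : A) else (X j : A) * ((bu j ^ (-(ε j)) : Aˣ) : A)) =
      (2 * ∑ a, ∑ c, mutatedBasisCoords n k ε i a * mutatedBasisCoords n k ε j c * Bm a c) •
        ((if i = k then (((X k)⁻¹ : Aˣ) : A)
            else (X i : A) * ((bu i ^ (-(ε i)) : Aˣ) : A)) *
          (if j = k then (((X k)⁻¹ : Aˣ) : A)
            else (X j : A) * ((bu j ^ (-(ε j)) : Aˣ) : A))) := by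
  have hP : IsSkewBiderivation P := ⟨haddr, hanti, hleib⟩
  -- `ε_{kk} = 0`, so `bu k` is the binomial `β` of which every `bu b` is `β` or `X_k β`.
  have hεk : ε k = 0 := by
    have h := hε k
    rw [show Bm k k = 0 by linarith [hskew k k], zero_mul] at h
    exact_mod_cast h
  have hX : ∀ a b, logBracket P (X a) (X b) = algebraMap ℚ A (2 * Bm a b) := fun a b ↦
    logBracket_eq_of_apply_eq (by rw [hbr, Algebra.smul_def])
  intro i j
  rw [← val_mutationPullback X bu k ε i, ← val_mutationPullback X bu k ε j,
    apply_units_eq_logBracket_mul P,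
    logBracket_mutationPullback hP Bm hskew X hX htp htm k dk ε hε (β := bu k)
      (by simpa [hεk] using hbu k) bu hbu, Algebra.smul_def]

/-- The classical `𝒳`-mutation with coefficients preserves the Poisson bracket
`{X^{v₁}, X^{v₂}}_𝒢 = 2{v₁,v₂}X^{v₁+v₂}`: for all `i, j`,
`{μ*(X̃_{i;𝒢'}), μ*(X̃_{j;𝒢'})}_𝒢 = μ*({X̃_{i;𝒢'}, X̃_{j;𝒢'}}_{𝒢'})`, where
`μ*(X̃_{k;𝒢'}) = X̃_{k;𝒢}^{−1}` and
`μ*(X̃_{i;𝒢'}) = X̃_{i;𝒢}(𝐭^{[sgn(ε_{ik})c_k]_+} + 𝐭^{[−sgn(ε_{ik})c_k]_+}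
X̃_{k;𝒢}^{−sgn(ε_{ik})})^{−ε_{ik}}` for `i ≠ k`.  Here `P` is the Poisson bracket of the chart
`𝒢`, satisfying `{X̃_i, X̃_j} = 2{e_i,e_j} X̃_i X̃_j` with `{e_i,e_j} = Bm i j`, the coefficients
`tp = 𝐭^{[c_k]_+}`, `tm = 𝐭^{[−c_k]_+}` are Casimirs, `ε_{ik} = {e_i,e_k}d_k`, and the bracket
`{·,·}_{𝒢'}` is computed from the mutated basis `e_{i;𝒢'}`. -/
theorem classical_mutation_preserves_poisson {A : Type*} [CommRing A] [Algebra ℚ A]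
    (P : A → A → A)
    (haddl : ∀ f g h : A, P (f + g) h = P f h + P g h)
    (haddr : ∀ f g h : A, P f (g + h) = P f g + P f h)
    (hsmul : ∀ (c : ℚ) (f g : A), P (c • f) g = c • P f g)
    (hanti : ∀ f g : A, P f g = - P g f)
    (hleib : ∀ f g h : A, P f (g * h) = g * P f h + h * P f g)
    (n : ℕ) (Bm : Fin n → Fin n → ℚ) (hskew : ∀ i j, Bm i j = - Bm j i)
    (X : Fin n → Aˣ)
    (hbr : ∀ i j, P ((X i : A)) ((X j : A)) = (2 * Bm i j) • ((X i : A) * (X j : A)))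
    (tp tm : A) (htp : ∀ a : A, P tp a = 0) (htm : ∀ a : A, P tm a = 0)
    (k : Fin n) (dk : ℚ) (ε : Fin n → ℤ) (hε : ∀ i, (ε i : ℚ) = Bm i k * dk)
    (bu : Fin n → Aˣ)
    (hbu : ∀ i, (bu i : A) =
      if 0 ≤ ε i then tp + tm * (((X k)⁻¹ : Aˣ) : A) else tm + tp * (X k : A)) :
    ∀ i j,
      P (if i = k then (((X k)⁻¹ : Aˣ) : A) else (X i : A) * ((bu i ^ (-(ε i)) : Aˣ) : A))
        (if j = k then (((X k)⁻¹ : Aˣ) : A) else (X j : A) * ((bu j ^ (-(ε j)) : Aˣ) : A)) =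
      (2 * ∑ a, ∑ c, mutatedBasisCoords n k ε i a * mutatedBasisCoords n k ε j c * Bm a c) •
        ((if i = k then (((X k)⁻¹ : Aˣ) : A)
            else (X i : A) * ((bu i ^ (-(ε i)) : Aˣ) : A)) *
          (if j = k then (((X k)⁻¹ : Aˣ) : A)
            else (X j : A) * ((bu j ^ (-(ε j)) : Aˣ) : A))) :=
  classical_mutation_preserves_poisson_general P haddr hanti hleib n Bm hskew X hbr tp tm htp htm k
    dk ε hε bu hbu
end
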